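/- For the variable-length binning scheme, the variance of â = Σ_j x_j y_j equals (s-1) Σ_i u_i^2 v_i^2 + (1/k)·(a^2 + Σ_i u_i^2 · Σ_i v_i^2 − 2 Σ_i u_i^2 v_i^2), where a = Σ_i u_i v_i. -/

import Mathlib

open MeasureTheory ProbabilityTheory Finset

/-!
For a fixed assignment `g`, the estimator is the quadratic form `∑ a b, c a b r_a r_b` in the
independent `r_i`, with `c a b = u a v b` when `g a = g b` and `0` otherwise. Independence and the
moments give `E[r_a r_b r_c r_d] = δ_ab δ_cd + δ_ac δ_bd + δ_ad δ_bc + (s - 3) δ_abcd`, so any such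
quadratic form has mean `∑ a, c a a` and variance
`∑ a b, c a b (c a b + c b a) + (s - 3) ∑ a, c a a ^ 2`.
Averaging over `g`, two distinct coordinates share a bin with probability `1 / k`.
-/

def quadForm {ι : Type*} [Fintype ι] (c : ι → ι → ℝ) (x : ι → ℝ) : ℝ :=
  ∑ a, ∑ b, c a b * (x a * x b)

instance : ENNReal.HolderTriple 4 4 2 := ⟨by
  rw [← two_mul, show (4 : ENNReal) = 2 * 2 by norm_num, ENNReal.mul_inv (by simp) (by simp),
    ← mul_assoc, ENNReal.mul_inv_cancel (by simp) (by simp), one_mul]⟩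

section Moments

variable {Ω ι : Type*} [MeasurableSpace Ω] {μ : Measure Ω} {r : ι → Ω → ℝ} {s : ℝ}

lemma memLp_two_mul (hL4 : ∀ i, MemLp (r i) 4 μ) (a b : ι) :
    MemLp (fun ω => r a ω * r b ω) 2 μ :=
  (hL4 b).mul' (hL4 a)

variable [DecidableEq ι]

theorem integral_mul_of_iIndepFun (hindep : iIndepFun r μ)
    (hmeas : ∀ i, AEMeasurable (r i) μ) (hm1 : ∀ i, ∫ ω, r i ω ∂μ = 0)
    (hm2 : ∀ i, ∫ ω, r i ω ^ 2 ∂μ = 1) (a b : ι) :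
    ∫ ω, r a ω * r b ω ∂μ = if a = b then 1 else 0 := by
  rcases eq_or_ne a b with rfl | hab
  · simp [← sq, hm2]
  · rw [(hindep.indepFun hab).integral_fun_mul_eq_mul_integral (hmeas a).aestronglyMeasurable
      (hmeas b).aestronglyMeasurable, hm1, zero_mul, if_neg hab]

variable [Fintype ι]

lemma mul_mul_mul_eq_prod_pow {M : Type*} [CommMonoid M] (x : ι → M) (a b c d : ι) :
    x a * x b * (x c * x d) =
      ∏ i, x i ^ (Pi.single a 1 + Pi.single b 1 + (Pi.single c 1 + Pi.single d 1) : ι → ℕ) i := by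
  simp only [Pi.add_apply, pow_add, prod_mul_distrib, Pi.single_apply, pow_ite, pow_one, pow_zero,
    prod_ite_eq', mem_univ, if_true]

lemma integral_mul_mul_mul_eq_prod_integral_pow (hindep : iIndepFun r μ)
    (hmeas : ∀ i, AEMeasurable (r i) μ) (a b c d : ι) :
    ∫ ω, r a ω * r b ω * (r c ω * r d ω) ∂μ =
      ∏ i, ∫ ω, r i ω ^
        (Pi.single a 1 + Pi.single b 1 + (Pi.single c 1 + Pi.single d 1) : ι → ℕ) i ∂μ := by
  rw [funext fun ω => mul_mul_mul_eq_prod_pow (r · ω) a b c d]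
  exact hindep.integral_fun_prod_comp hmeas fun i => (continuous_pow _).aestronglyMeasurable

theorem integral_mul_mul_mul_of_iIndepFun (hindep : iIndepFun r μ)
    (hmeas : ∀ i, AEMeasurable (r i) μ) (hm1 : ∀ i, ∫ ω, r i ω ∂μ = 0)
    (hm2 : ∀ i, ∫ ω, r i ω ^ 2 ∂μ = 1) (hm4 : ∀ i, ∫ ω, r i ω ^ 4 ∂μ = s) (a b c d : ι) :
    ∫ ω, r a ω * r b ω * (r c ω * r d ω) ∂μ =
      (if a = b then 1 else 0) * (if c = d then 1 else 0)
        + (if a = c then 1 else 0) * (if b = d then 1 else 0)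
        + (if a = d then 1 else 0) * (if b = c then 1 else 0)
        + (s - 3) * ((if a = b then 1 else 0) * (if a = c then 1 else 0) *
          (if a = d then 1 else 0)) := by
  rw [integral_mul_mul_mul_eq_prod_integral_pow hindep hmeas]
  have := hindep.isProbabilityMeasure
  -- Apart from `a = b = c = d` and the three pairings, every equality pattern among `a, b, c, d`
  -- has an index occurring exactly once, whose factor is `E r_i = 0`.
  set e : ι → ℕ := Pi.single a 1 + Pi.single b 1 + (Pi.single c 1 + Pi.single d 1)
  have he : ∀ i, e i = (if i = a then 1 else 0) + (if i = b then 1 else 0) +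
      ((if i = c then 1 else 0) + (if i = d then 1 else 0)) := fun i => by
    simp [e, Pi.single_apply]
  have absent : ∀ i, e i = 0 → ∫ ω, r i ω ^ e i ∂μ = 1 := fun i hi => by simp [hi]
  have single : ∀ x, e x = 1 → ∏ i, ∫ ω, r i ω ^ e i ∂μ = 0 := fun x hx =>
    prod_eq_zero (mem_univ x) (by simpa [hx] using hm1 x)
  have pair : ∀ x y, x ≠ y → e x = 2 → e y = 2 → (∀ i, i ≠ x ∧ i ≠ y → e i = 0) →
      ∏ i, ∫ ω, r i ω ^ e i ∂μ = 1 := fun x y hxy hx hy h => by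
    rw [Fintype.prod_eq_mul x y hxy fun i hi => absent i (h i hi), hx, hy, hm2, hm2, one_mul]
  rcases eq_or_ne a b with rfl | hab
  · rcases eq_or_ne c d with rfl | hcd
    · rcases eq_or_ne a c with rfl | hac
      · rw [Fintype.prod_eq_single a fun i hi => absent i (by simp [he, hi])]
        simp [he, hm4]; ring
      · rw [pair a c hac (by simp [he, hac]) (by simp [he, hac.symm])
          fun i hi => by simp [he, hi.1, hi.2]]
        simp [hac]
    · rcases eq_or_ne a c with rfl | hac
      · rw [single d (by simp [he, hcd.symm])]; simp [hcd]
      · rw [single c (by simp [he, hcd, hac.symm])]; simp [hcd, hac]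
  · rcases eq_or_ne a c with rfl | hac
    · rcases eq_or_ne b d with rfl | hbd
      · rw [pair a b hab (by simp [he, hab]) (by simp [he, hab.symm])
          fun i hi => by simp [he, hi.1, hi.2]]
        simp [hab]
      · rw [single b (by simp [he, hab.symm, hbd])]; simp [hab, hab.symm, hbd]
    · rcases eq_or_ne a d with rfl | had
      · rcases eq_or_ne b c with rfl | hbc
        · rw [pair a b hab (by simp [he, hab]) (by simp [he, hab.symm])
            fun i hi => by simp [he, hi.1, hi.2]]
          simp [hab]
        · rw [single b (by simp [he, hab.symm, hbc])]; simp [hab, hac, hbc]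
      · rw [single a (by simp [he, hab, hac, had])]; simp [hab, hac, had]

theorem integral_quadForm (hindep : iIndepFun r μ) (hL4 : ∀ i, MemLp (r i) 4 μ)
    (hm1 : ∀ i, ∫ ω, r i ω ∂μ = 0) (hm2 : ∀ i, ∫ ω, r i ω ^ 2 ∂μ = 1) (c : ι → ι → ℝ) :
    ∫ ω, quadForm c (r · ω) ∂μ = ∑ a, c a a := by
  unfold quadForm
  have := hindep.isProbabilityMeasure
  have hint : ∀ a b, Integrable (fun ω => r a ω * r b ω) μ := fun a b =>
    (memLp_two_mul hL4 a b).integrable one_le_two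
  rw [integral_finsetSum _ fun a _ => integrable_finsetSum _ fun b _ => (hint a b).const_mul _]
  refine sum_congr rfl fun a _ => ?_
  rw [integral_finsetSum _ fun b _ => (hint a b).const_mul _]
  simp [integral_const_mul,
    integral_mul_of_iIndepFun hindep (fun i => (hL4 i).aemeasurable) hm1 hm2]

theorem integral_quadForm_sq (hindep : iIndepFun r μ) (hL4 : ∀ i, MemLp (r i) 4 μ)
    (hm1 : ∀ i, ∫ ω, r i ω ∂μ = 0) (hm2 : ∀ i, ∫ ω, r i ω ^ 2 ∂μ = 1)
    (hm4 : ∀ i, ∫ ω, r i ω ^ 4 ∂μ = s) (c : ι → ι → ℝ) :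
    ∫ ω, quadForm c (r · ω) ^ 2 ∂μ =
      (∑ a, c a a) ^ 2 + ∑ a, ∑ b, c a b * (c a b + c b a) + (s - 3) * ∑ a, c a a ^ 2 := by
  unfold quadForm
  have hint : ∀ a b a' b', Integrable (fun ω => r a ω * r b ω * (r a' ω * r b' ω)) μ :=
    fun a b a' b' => (memLp_two_mul hL4 a b).integrable_mul (memLp_two_mul hL4 a' b')
  have expand : ∀ ω, (∑ a, ∑ b, c a b * (r a ω * r b ω)) ^ 2 =
      ∑ x : ι × ι × ι × ι, c x.1 x.2.1 * c x.2.2.1 x.2.2.2 *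
        (r x.1 ω * r x.2.1 ω * (r x.2.2.1 ω * r x.2.2.2 ω)) := fun ω => by
    simp only [Fintype.sum_prod_type, sq, sum_mul]
    simp only [mul_sum, mul_mul_mul_comm]
  simp_rw [expand]
  rw [integral_finsetSum _ fun x _ => (hint _ _ _ _).const_mul _]
  simp only [Fintype.sum_prod_type, integral_const_mul,
    integral_mul_mul_mul_of_iIndepFun hindep (fun i => (hL4 i).aemeasurable) hm1 hm2 hm4, mul_add,
    sum_add_distrib, mul_ite, mul_one, mul_zero, sum_ite_irrel, sum_const_zero, sum_ite_eq,
    mem_univ, if_true]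
  rw [sq, sum_mul_sum, mul_sum]
  simp only [sq, mul_comm (s - 3)]
  ring

theorem integral_quadForm_sub_trace_sq (hindep : iIndepFun r μ) (hL4 : ∀ i, MemLp (r i) 4 μ)
    (hm1 : ∀ i, ∫ ω, r i ω ∂μ = 0) (hm2 : ∀ i, ∫ ω, r i ω ^ 2 ∂μ = 1)
    (hm4 : ∀ i, ∫ ω, r i ω ^ 4 ∂μ = s) (c : ι → ι → ℝ) :
    ∫ ω, (quadForm c (r · ω) - ∑ a, c a a) ^ 2 ∂μ =
      ∑ a, ∑ b, c a b * (c a b + c b a) + (s - 3) * ∑ a, c a a ^ 2 := by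
  have := hindep.isProbabilityMeasure
  have hQ : MemLp (fun ω => quadForm c (r · ω)) 2 μ :=
    memLp_finsetSum _ fun a _ => memLp_finsetSum _ fun b _ => (memLp_two_mul hL4 a b).const_mul _
  rw [← integral_quadForm hindep hL4 hm1 hm2 c, ← variance_eq_integral hQ.aemeasurable,
    variance_eq_sub hQ, integral_quadForm hindep hL4 hm1 hm2 c]
  simp only [Pi.pow_apply, integral_quadForm_sq hindep hL4 hm1 hm2 hm4 c]
  ring

end Moments

section Binning

variable {ι κ : Type*} [Fintype ι] [Fintype κ] [DecidableEq κ]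

lemma sum_bin_mul_sum_bin (g : ι → κ) (x y : ι → ℝ) :
    ∑ j, (∑ i, x i * if g i = j then 1 else 0) * (∑ i, y i * if g i = j then 1 else 0) =
      ∑ a, ∑ b, if g a = g b then x a * y b else 0 := by
  simp only [mul_ite, mul_one, mul_zero, sum_mul_sum, ite_mul, zero_mul]
  rw [sum_comm]
  refine sum_congr rfl fun a _ => ?_
  rw [sum_comm]
  simp [eq_comm]

variable [DecidableEq ι]

lemma card_subtype_apply_eq_apply_mul_card {a b : ι} (hab : a ≠ b) :
    Fintype.card {g : ι → κ // g a = g b} * Fintype.card κ = Fintype.card κ ^ Fintype.card ι := by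
  rw [← Fintype.card_prod, ← Fintype.card_fun]
  exact Fintype.card_congr
    { toFun := fun p => Function.update p.1.1 b p.2
      invFun := fun g => (⟨Function.update g b (g a), by simp [hab]⟩, g b)
      left_inv := fun ⟨⟨g, hg⟩, x⟩ => by simp [hab, ← hg]
      right_inv := fun g => by simp }

lemma sum_ite_apply_eq_apply [Nonempty κ] (a b : ι) :
    (∑ g : ι → κ, if g a = g b then 1 else 0 : ℝ) =
      (Fintype.card κ : ℝ) ^ Fintype.card ι * if a = b then 1 else (Fintype.card κ : ℝ)⁻¹ := by
  rcases eq_or_ne a b with rfl | hab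
  · simp
  · rw [sum_boole, if_neg hab, ← Fintype.card_subtype, eq_mul_inv_iff_mul_eq₀ (by positivity)]
    exact_mod_cast card_subtype_apply_eq_apply_mul_card hab

lemma sum_sum_sum_ite_apply_eq_apply_div [Nonempty κ] (w : ι → ι → ℝ) :
    (∑ g : ι → κ, ∑ a, ∑ b, if g a = g b then w a b else 0) /
        (Fintype.card κ : ℝ) ^ Fintype.card ι =
      (Fintype.card κ : ℝ)⁻¹ * ∑ a, ∑ b, w a b + (1 - (Fintype.card κ : ℝ)⁻¹) * ∑ a, w a a := by
  have hw : ∀ (g : ι → κ) a b,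
      (if g a = g b then w a b else 0) = (if g a = g b then 1 else 0) * w a b :=
    fun g a b => by rw [ite_mul, one_mul, zero_mul]
  simp_rw [hw]
  rw [sum_comm]
  simp_rw [sum_comm (s := (univ : Finset (ι → κ))), ← sum_mul, sum_ite_apply_eq_apply]
  have hN : (Fintype.card κ : ℝ) ^ Fintype.card ι ≠ 0 := by positivity
  have hp : ∀ a b : ι, (if a = b then 1 else (Fintype.card κ : ℝ)⁻¹) =
      (Fintype.card κ : ℝ)⁻¹ + (1 - (Fintype.card κ : ℝ)⁻¹) * if a = b then 1 else 0 :=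
    fun a b => by split_ifs <;> ring
  simp only [mul_assoc, mul_div_cancel_left₀ _ hN, hp, add_mul, sum_add_distrib, ← mul_sum,
    ite_mul, one_mul, zero_mul, mul_ite, mul_zero, sum_ite_eq, mem_univ, if_true]

end Binning

section Estimator

variable {Ω ι κ : Type*} [MeasurableSpace Ω] {μ : Measure Ω} [Fintype ι] [DecidableEq ι]
  [Fintype κ] [DecidableEq κ] {r : ι → Ω → ℝ} {s : ℝ}

theorem integral_binned_sub_sq (hindep : iIndepFun r μ) (hL4 : ∀ i, MemLp (r i) 4 μ)
    (hm1 : ∀ i, ∫ ω, r i ω ∂μ = 0) (hm2 : ∀ i, ∫ ω, r i ω ^ 2 ∂μ = 1)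
    (hm4 : ∀ i, ∫ ω, r i ω ^ 4 ∂μ = s) (u v : ι → ℝ) (g : ι → κ) :
    ∫ ω, ((∑ j, (∑ i, u i * r i ω * (if g i = j then 1 else 0)) *
        (∑ i, v i * r i ω * (if g i = j then 1 else 0))) - ∑ i, u i * v i) ^ 2 ∂μ =
      (∑ a, ∑ b, if g a = g b then u a * v b * (u a * v b + u b * v a) else 0)
        + (s - 3) * ∑ a, (u a * v a) ^ 2 := by
  set c : ι → ι → ℝ := fun a b => if g a = g b then u a * v b else 0
  have hQ : ∀ ω, ∑ j, (∑ i, u i * r i ω * (if g i = j then 1 else 0)) *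
      (∑ i, v i * r i ω * (if g i = j then 1 else 0)) = quadForm c (r · ω) := fun ω => by
    rw [sum_bin_mul_sum_bin g (fun i => u i * r i ω) (fun i => v i * r i ω)]
    simp only [quadForm, c, ite_mul, zero_mul, mul_mul_mul_comm]
  have htrace : ∑ i, u i * v i = ∑ a, c a a := by simp [c]
  simp_rw [hQ, htrace]
  rw [integral_quadForm_sub_trace_sq hindep hL4 hm1 hm2 hm4 c]
  simp only [c, if_pos rfl]
  congr 1
  refine sum_congr rfl fun a _ => sum_congr rfl fun b _ => ?_
  rcases eq_or_ne (g a) (g b) with h | h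
  · simp [h]
  · simp [h, h.symm]

end Estimator

/-- Since `â` is unbiased, its variance is `E[(â - a)²]`, averaged uniformly over the `k ^ D`
bin assignments `g : Fin D → Fin k` and over `r`. -/
theorem oporp_variable_binning_variance_general
    {Ω : Type*} [MeasurableSpace Ω] (μ : Measure Ω)
    {D k : ℕ} (hk : 0 < k)
    (u v : Fin D → ℝ) (s : ℝ) (r : Fin D → Ω → ℝ)
    (hindep : iIndepFun r μ)
    (hL4 : ∀ i, MemLp (r i) 4 μ)
    (hm1 : ∀ i, ∫ ω, r i ω ∂μ = 0)
    (hm2 : ∀ i, ∫ ω, (r i ω) ^ 2 ∂μ = 1)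
    (hm4 : ∀ i, ∫ ω, (r i ω) ^ 4 ∂μ = s) :
    (∑ g : Fin D → Fin k, ∫ ω,
        ((∑ j : Fin k,
            (∑ i, u i * r i ω * (if g i = j then (1 : ℝ) else 0)) *
            (∑ i, v i * r i ω * (if g i = j then (1 : ℝ) else 0)))
          - ∑ i, u i * v i) ^ 2 ∂μ) / ((k : ℝ) ^ D)
      = (s - 1) * (∑ i, (u i) ^ 2 * (v i) ^ 2)
        + (1 / k) *
          ((∑ i, u i * v i) ^ 2 + (∑ i, (u i) ^ 2) * (∑ i, (v i) ^ 2)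
            - 2 * ∑ i, (u i) ^ 2 * (v i) ^ 2) := by
  have : Nonempty (Fin k) := ⟨⟨0, hk⟩⟩
  have hpairs : ∑ a, ∑ b, u a * v b * (u a * v b + u b * v a) =
      (∑ i, u i ^ 2) * (∑ i, v i ^ 2) + (∑ i, u i * v i) ^ 2 := by
    simp only [sq, sum_mul_sum, ← sum_add_distrib]
    exact sum_congr rfl fun a _ => sum_congr rfl fun b _ => by ring
  have haverage := sum_sum_sum_ite_apply_eq_apply_div (κ := Fin k)
    fun a b : Fin D => u a * v b * (u a * v b + u b * v a)
  simp only [Fintype.card_fin] at haverage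
  simp_rw [integral_binned_sub_sq hindep hL4 hm1 hm2 hm4 u v]
  have hdiag : ∑ a, u a * v a * (u a * v a + u a * v a) = 2 * ∑ i, u i ^ 2 * v i ^ 2 := by
    rw [mul_sum]
    exact sum_congr rfl fun a _ => by ring
  rw [sum_add_distrib, add_div, haverage, hpairs, hdiag]
  simp only [sum_const, card_univ, Fintype.card_fun, Fintype.card_fin, nsmul_eq_mul, Nat.cast_pow,
    mul_pow]
  rw [mul_div_cancel_left₀ _ (by positivity)]
  ring

/-- Variance of the OPORP inner product estimator under the variable-length binning
scheme (each coordinate independently uniformly assigned to one of `k` bins):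
`Var(â₂) = (s-1) Σ u_i²v_i² + (1/k)·(a² + Σu_i²·Σv_i² − 2Σu_i²v_i²)`.
Since `â` is unbiased, the variance is `E[(â − a)²]`, averaging uniformly over the
`k^D` bin assignments `g : Fin D → Fin k` and over the independent `r`. -/
theorem oporp_variable_binning_variance
    {Ω : Type*} [MeasurableSpace Ω] (μ : Measure Ω) [IsProbabilityMeasure μ]
    {D k : ℕ} (hk : 0 < k)
    (u v : Fin D → ℝ) (s : ℝ) (r : Fin D → Ω → ℝ)
    (hrmeas : ∀ i, Measurable (r i))
    (hindep : iIndepFun r μ)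
    (hL4 : ∀ i, MemLp (r i) 4 μ)
    (hm1 : ∀ i, ∫ ω, r i ω ∂μ = 0)
    (hm2 : ∀ i, ∫ ω, (r i ω) ^ 2 ∂μ = 1)
    (hm3 : ∀ i, ∫ ω, (r i ω) ^ 3 ∂μ = 0)
    (hm4 : ∀ i, ∫ ω, (r i ω) ^ 4 ∂μ = s) :
    (∑ g : Fin D → Fin k, ∫ ω,
        ((∑ j : Fin k,
            (∑ i, u i * r i ω * (if g i = j then (1 : ℝ) else 0)) *
            (∑ i, v i * r i ω * (if g i = j then (1 : ℝ) else 0)))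
          - ∑ i, u i * v i) ^ 2 ∂μ) / ((k : ℝ) ^ D)
      = (s - 1) * (∑ i, (u i) ^ 2 * (v i) ^ 2)
        + (1 / k) *
          ((∑ i, u i * v i) ^ 2 + (∑ i, (u i) ^ 2) * (∑ i, (v i) ^ 2)
            - 2 * ∑ i, (u i) ^ 2 * (v i) ^ 2) :=
  oporp_variable_binning_variance_general μ hk u v s r hindep hL4 hm1 hm2 hm4
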